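/- Let H be a target graph possessing an ordering of its automorphic similarity classes whose automorphic similarity matrix has the increasing columns property, and let H̃ be obtained from H by adding some number b ≥ 1 of looped dominating vertices (new looped vertices each adjacent to every other vertex of H̃). Then H̃ is Hoffman-London. -/

import Mathlib

/-- The number of `H`-colorings of a simple graph `G`, where the target graph `H`
is given by a (possibly reflexive) adjacency relation `HAdj` on a finite vertex set. -/
noncomputable def homCount {VG VH : Type} [Fintype VG] [Fintype VH]
    (G : SimpleGraph VG) (HAdj : VH → VH → Prop) : ℕ :=
  Nat.card {f : VG → VH // ∀ u v : VG, G.Adj u v → HAdj (f u) (f v)}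

/-- The graph obtained from `H` by adding `b` looped dominating vertices: each new vertex
is looped and adjacent to every other vertex (old and new). -/
def addLoopedDominating {VH : Type} (HAdj : VH → VH → Prop) (b : ℕ) :
    (VH ⊕ Fin b) → (VH ⊕ Fin b) → Prop
  | Sum.inl u, Sum.inl v => HAdj u v
  | _, _ => True

/-!
Rank the vertices of `H̃` by the index of their class, with the added vertices on top. Then the
adjacency matrix `A` of `H̃` sends vectors that are monotone in this rank to monotone vectors: by
the increasing columns property each row of `A` has, above every threshold, at least as many
ones as any row of lower rank, and the rows of the added vertices consist of ones only.
Say that `u` dominates `v` when `g ⬝ᵥ v ≤ g ⬝ᵥ u` for every monotone `g`. Cutting a tree `T` at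
an edge at its root `r` and inducting, the vector `x ↦ #{colorings of T with r ↦ x}` is monotone
and dominates `A ^ (n - 1) *ᵥ 1`, the same vector for the path `P_n` rooted at an end. The step
needs `A ^ (s + t) *ᵥ 1 ≼ (A ^ s *ᵥ 1) * (A ^ t *ᵥ 1)`, which is Chebyshev's sum inequality
weighted by the symmetric matrix `A ^ s`. Summing over `x` gives `hom(P_n, H̃) ≤ hom(T, H̃)`.
-/

open Finset Matrix SimpleGraph

namespace SimpleGraph

variable {V : Type*} {G : SimpleGraph V}

lemma Preconnected.reachable_deleteEdges_or (hG : G.Preconnected) (r c v : V) :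
    (G.deleteEdges {s(r, c)}).Reachable r v ∨ (G.deleteEdges {s(r, c)}).Reachable c v := by
  set G' := G.deleteEdges {s(r, c)}
  suffices h : ∀ u w, G.Walk u w → G'.Reachable r u ∨ G'.Reachable c u →
      G'.Reachable r w ∨ G'.Reachable c w from h r v (hG r v).some (Or.inl .rfl)
  intro u w p
  induction p with
  | nil => exact id
  | @cons a b _ hab _ ih =>
    refine fun ha => ih ?_
    by_cases he : s(a, b) = s(r, c)
    · rcases Sym2.eq_iff.mp he with ⟨-, rfl⟩ | ⟨-, rfl⟩
      exacts [Or.inr .rfl, Or.inl .rfl]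
    · have hab' : G'.Adj a b := deleteEdges_adj.mpr ⟨hab, he⟩
      exact ha.imp (·.trans hab'.reachable) (·.trans hab'.reachable)

lemma induce_deleteEdges_eq {s : Set V} {u v : V} (h : ¬(u ∈ s ∧ v ∈ s)) :
    (G.deleteEdges {s(u, v)}).induce s = G.induce s := by
  ext ⟨a, ha⟩ ⟨b, hb⟩
  simp only [comap_adj, Function.Embedding.subtype_apply, deleteEdges_adj, Set.mem_singleton_iff,
    and_iff_left_iff_imp]
  rintro - he
  rcases Sym2.eq_iff.mp he with ⟨rfl, rfl⟩ | ⟨rfl, rfl⟩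
  exacts [h ⟨ha, hb⟩, h ⟨hb, ha⟩]

lemma IsTree.exists_induce_isTree_compl {T : SimpleGraph V} (hT : T.IsTree) {r c : V}
    (hrc : T.Adj r c) :
    ∃ S : Set V, r ∈ S ∧ c ∉ S ∧ (∀ u v, T.Adj u v → u ∈ S → v ∉ S → u = r ∧ v = c) ∧
      (T.induce S).IsTree ∧ (T.induce Sᶜ).IsTree := by
  set T' := T.deleteEdges {s(r, c)}
  have hT' : T'.IsAcyclic := hT.isAcyclic.anti (deleteEdges_le _)
  have hbridge : ¬T'.Reachable r c :=
    isBridge_iff.mp (isAcyclic_iff_forall_adj_isBridge.mp hT.isAcyclic hrc)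
  have mem_supp {x v : V} : v ∈ (T'.connectedComponentMk x).supp ↔ T'.Reachable x v :=
    ((T'.connectedComponentMk x).mem_supp_iff v).trans ConnectedComponent.eq |>.trans
      ⟨.symm, .symm⟩
  set S := (T'.connectedComponentMk r).supp
  have hr : r ∈ S := mem_supp.mpr .rfl
  have hc : c ∉ S := fun h => hbridge (mem_supp.mp h)
  have hSc : Sᶜ = (T'.connectedComponentMk c).supp := by
    ext v
    rw [Set.mem_compl_iff, mem_supp, mem_supp]
    exact ⟨(hT.connected.preconnected.reachable_deleteEdges_or r c v).resolve_left,
      fun hcv hrv => hbridge (hrv.trans hcv.symm)⟩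
  refine ⟨S, hr, hc, fun u v huv hu hv => ?_, ?_, ?_⟩
  · by_cases he : s(u, v) = s(r, c)
    · rcases Sym2.eq_iff.mp he with h | ⟨rfl, -⟩
      exacts [h, (hc hu).elim]
    · exact (hv (mem_supp.mpr ((mem_supp.mp hu).trans
        (deleteEdges_adj.mpr ⟨huv, he⟩).reachable))).elim
  · rw [← induce_deleteEdges_eq fun h => hc h.2]
    exact hT'.isTree_connectedComponent _
  · rw [← induce_deleteEdges_eq (s := Sᶜ) fun h => h.1 hr, hSc]
    exact hT'.isTree_connectedComponent _

def pathGraphSuccIso (n : ℕ) :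
    pathGraph (n + 1) ≃g (pathGraph (n + 2)).induce ({0}ᶜ : Set (Fin (n + 2))) where
  toFun i := ⟨i.succ, Fin.succ_ne_zero i⟩
  invFun v := v.1.pred v.2
  left_inv i := Fin.pred_succ i
  right_inv v := Subtype.ext (Fin.succ_pred _ v.2)
  map_rel_iff' := by simp [pathGraph_adj]

end SimpleGraph

namespace HoffmanLondon

section Dominance

variable {X α : Type*} [LinearOrder α] (ι : X → α)

def MonotoneAlong (g : X → ℕ) : Prop := ∀ ⦃z w⦄, ι z ≤ ι w → g z ≤ g w

def Dominates [Fintype X] (u v : X → ℕ) : Prop := ∀ g, MonotoneAlong ι g → g ⬝ᵥ v ≤ g ⬝ᵥ u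

def PreservesMonotoneAlong [Fintype X] (A : Matrix X X ℕ) : Prop :=
  ∀ g, MonotoneAlong ι g → MonotoneAlong ι (A *ᵥ g)

variable {ι}

lemma monotoneAlong_one : MonotoneAlong ι 1 := fun _ _ _ => le_rfl

lemma MonotoneAlong.mul {g h : X → ℕ} (hg : MonotoneAlong ι g) (hh : MonotoneAlong ι h) :
    MonotoneAlong ι (g * h) :=
  fun _ _ hzw => Nat.mul_le_mul (hg hzw) (hh hzw)

lemma MonotoneAlong.mul_add_mul_le {g h : X → ℕ} (hg : MonotoneAlong ι g)
    (hh : MonotoneAlong ι h) (z w : X) : g z * h w + g w * h z ≤ g z * h z + g w * h w := by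
  rcases le_total (ι z) (ι w) with hzw | hwz
  · exact mul_add_mul_le_mul_add_mul (hg hzw) (hh hzw)
  · linarith [mul_add_mul_le_mul_add_mul (hg hwz) (hh hwz)]

variable [Fintype X]

lemma MonotoneAlong.exists_threshold {g : X → ℕ} (hg : MonotoneAlong ι g) (t : ℕ) :
    (∀ z, g z ≤ t) ∨ ∃ c, ∀ z, t < g z ↔ c ≤ ι z := by
  by_cases hU : (univ.filter fun z => t < g z).Nonempty
  · obtain ⟨z₀, hz₀, hmin⟩ := exists_min_image _ ι hU
    refine Or.inr ⟨ι z₀, fun z => ⟨fun hz => hmin z (by simpa using hz), fun hz => ?_⟩⟩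
    exact (mem_filter.mp hz₀).2.trans_le (hg hz)
  · refine Or.inl fun z => ?_
    by_contra! hz
    exact hU ⟨z, by simpa using hz⟩

lemma Dominates.refl (u : X → ℕ) : Dominates ι u u := fun _ _ => le_rfl

lemma Dominates.trans {u v w : X → ℕ} (huv : Dominates ι u v) (hvw : Dominates ι v w) :
    Dominates ι u w :=
  fun g hg => (hvw g hg).trans (huv g hg)

lemma Dominates.sum_le {u v : X → ℕ} (h : Dominates ι u v) : ∑ z, v z ≤ ∑ z, u z := by
  simpa [dotProduct] using h 1 monotoneAlong_one

/-- Every monotone weight is a sum of indicators of upper tails `{z | c ≤ ι z}`. -/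
lemma dominates_of_forall_tail_le {u v : X → ℕ}
    (h : ∀ c, ∑ z, (if c ≤ ι z then v z else 0) ≤ ∑ z, (if c ≤ ι z then u z else 0)) :
    Dominates ι u v := by
  intro g hg
  have layers (w : X → ℕ) :
      g ⬝ᵥ w = ∑ t ∈ range (∑ z, g z), ∑ z, if t < g z then w z else 0 := by
    rw [Finset.sum_comm]
    refine Finset.sum_congr rfl fun z _ => ?_
    have hz : g z ≤ ∑ z, g z := single_le_sum (fun _ _ => Nat.zero_le _) (mem_univ z)
    have hrange : (range (∑ z, g z)).filter (· < g z) = range (g z) := by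
      ext; simp only [mem_filter, mem_range]; omega
    rw [← sum_filter, sum_const, smul_eq_mul, hrange, card_range]
  rw [layers u, layers v]
  refine sum_le_sum fun t _ => ?_
  rcases hg.exists_threshold t with hsmall | ⟨c, hc⟩
  · simp [(hsmall _).not_gt]
  · simpa only [hc] using h c

lemma dotProduct_mul_eq_mul_dotProduct {R : Type*} [NonUnitalSemiring R] (f g h : X → R) :
    f ⬝ᵥ (g * h) = (f * g) ⬝ᵥ h := by
  simp only [dotProduct, Pi.mul_apply, mul_assoc]

lemma Dominates.mul {g₁ g₂ p₁ p₂ : X → ℕ} (hp₁ : MonotoneAlong ι p₁) (hg₂ : MonotoneAlong ι g₂)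
    (h₁ : Dominates ι g₁ p₁) (h₂ : Dominates ι g₂ p₂) : Dominates ι (g₁ * g₂) (p₁ * p₂) := by
  intro h hh
  calc h ⬝ᵥ (p₁ * p₂) = (h * p₁) ⬝ᵥ p₂ := dotProduct_mul_eq_mul_dotProduct ..
    _ ≤ (h * p₁) ⬝ᵥ g₂ := h₂ _ (hh.mul hp₁)
    _ = (h * g₂) ⬝ᵥ p₁ := by
      rw [← dotProduct_mul_eq_mul_dotProduct, mul_comm, dotProduct_mul_eq_mul_dotProduct]
    _ ≤ (h * g₂) ⬝ᵥ g₁ := h₁ _ (hh.mul hg₂)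
    _ = h ⬝ᵥ (g₁ * g₂) := by rw [← dotProduct_mul_eq_mul_dotProduct, mul_comm]

/-- Chebyshev's sum inequality, weighted by a symmetric matrix. -/
lemma dotProduct_mulVec_le_of_isSymm {B : Matrix X X ℕ} (hB : B.IsSymm) {g h : X → ℕ}
    (hg : MonotoneAlong ι g) (hh : MonotoneAlong ι h) :
    g ⬝ᵥ (B *ᵥ h) ≤ (g * h) ⬝ᵥ (B *ᵥ 1) := by
  have swap (F : X → X → ℕ) : ∑ z, ∑ w, B z w * F z w = ∑ z, ∑ w, B z w * F w z := by
    rw [Finset.sum_comm]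
    exact sum_congr rfl fun z _ => sum_congr rfl fun w _ => by rw [hB.apply w z]
  have lhs : g ⬝ᵥ (B *ᵥ h) = ∑ z, ∑ w, B z w * (g z * h w) := by
    simp only [dotProduct, mulVec, mul_sum]
    exact sum_congr rfl fun z _ => sum_congr rfl fun w _ => by ring
  have rhs : (g * h) ⬝ᵥ (B *ᵥ 1) = ∑ z, ∑ w, B z w * (g z * h z) := by
    simp only [dotProduct, mulVec, mul_sum, Pi.mul_apply, Pi.one_apply]
    exact sum_congr rfl fun z _ => sum_congr rfl fun w _ => by ring
  have key : ∑ z, ∑ w, B z w * (g z * h w + g w * h z)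
      ≤ ∑ z, ∑ w, B z w * (g z * h z + g w * h w) :=
    sum_le_sum fun z _ => sum_le_sum fun w _ =>
      Nat.mul_le_mul_left _ (hg.mul_add_mul_le hh z w)
  -- by the symmetry of `B`, `key` says `2 * lhs ≤ 2 * rhs`
  simp only [mul_add, sum_add_distrib, ← swap fun z w => g z * h z,
    ← swap fun z w => g z * h w] at key
  rw [lhs, rhs]
  omega

lemma preservesMonotoneAlong_of_dominates {A : Matrix X X ℕ}
    (hA : ∀ ⦃z w⦄, ι z ≤ ι w → Dominates ι (A w) (A z)) : PreservesMonotoneAlong ι A := by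
  intro g hg z w hzw
  simp only [mulVec, dotProduct_comm _ g]
  exact hA hzw g hg

end Dominance

section Walks

variable {X α : Type*} [Fintype X] [LinearOrder α] {ι : X → α} {A : Matrix X X ℕ}

lemma Dominates.mulVec (hsymm : A.IsSymm) (hA : PreservesMonotoneAlong ι A) {u v : X → ℕ}
    (h : Dominates ι u v) : Dominates ι (A *ᵥ u) (A *ᵥ v) := by
  intro g hg
  simp only [dotProduct_mulVec, ← mulVec_transpose, hsymm.eq]
  exact h _ (hA g hg)

variable [DecidableEq X]

lemma monotoneAlong_pow_mulVec_one (hA : PreservesMonotoneAlong ι A) (n : ℕ) :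
    MonotoneAlong ι (A ^ n *ᵥ 1) := by
  induction n with
  | zero => simpa using monotoneAlong_one
  | succ n ih => simpa [pow_succ', ← mulVec_mulVec] using hA _ ih

lemma dominates_pow_add (hsymm : A.IsSymm) (hA : PreservesMonotoneAlong ι A) (s t : ℕ) :
    Dominates ι ((A ^ s *ᵥ 1) * (A ^ t *ᵥ 1)) (A ^ (s + t) *ᵥ 1) := by
  intro h hh
  calc h ⬝ᵥ (A ^ (s + t) *ᵥ 1) = h ⬝ᵥ (A ^ s *ᵥ (A ^ t *ᵥ 1)) := by
        rw [pow_add, mulVec_mulVec]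
    _ ≤ (h * (A ^ t *ᵥ 1)) ⬝ᵥ (A ^ s *ᵥ 1) :=
        dotProduct_mulVec_le_of_isSymm (hsymm.pow s) hh (monotoneAlong_pow_mulVec_one hA t)
    _ = h ⬝ᵥ ((A ^ s *ᵥ 1) * (A ^ t *ᵥ 1)) := by
        rw [← dotProduct_mul_eq_mul_dotProduct, mul_comm]

end Walks

def relMatrix {X : Type*} (R : X → X → Prop) [DecidableRel R] : Matrix X X ℕ :=
  Matrix.of fun z w => if R z w then 1 else 0

lemma relMatrix_isSymm {X : Type*} (R : X → X → Prop) [DecidableRel R] [Std.Symm R] :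
    (relMatrix R).IsSymm :=
  IsSymm.ext fun z w => by simp [relMatrix, Std.Symm.iff z w]

lemma relMatrix_mulVec_le_sum {X : Type*} [Fintype X] (R : X → X → Prop) [DecidableRel R]
    (g : X → ℕ) (z : X) : (relMatrix R *ᵥ g) z ≤ ∑ w, g w :=
  sum_le_sum fun w _ => by by_cases h : R z w <;> simp [relMatrix, h]

lemma card_subtype_eq_sum_card_fiber {α β : Type*} [Finite α] [Fintype β] (P : α → Prop)
    (φ : α → β) : Nat.card {a // P a} = ∑ b, Nat.card {a // P a ∧ φ a = b} := by
  rw [← Nat.card_congr (Equiv.sigmaFiberEquiv fun a : {a // P a} => φ a), Nat.card_sigma]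
  exact sum_congr rfl fun b _ =>
    Nat.card_congr (Equiv.subtypeSubtypeEquivSubtypeInter P (φ · = b))

section Trees

variable {X : Type} (R : X → X → Prop)

noncomputable def rootedHomCount {V : Type} (T : SimpleGraph V) (r : V) (x : X) : ℕ :=
  Nat.card {f : V → X // (∀ u v, T.Adj u v → R (f u) (f v)) ∧ f r = x}

variable {R}

lemma rootedHomCount_of_subsingleton {V : Type} [Subsingleton V] (T : SimpleGraph V) (r : V) :
    rootedHomCount R T r = 1 := by
  funext x
  have : Unique {f : V → X // (∀ u v, T.Adj u v → R (f u) (f v)) ∧ f r = x} :=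
    { default := ⟨fun _ => x, fun u v huv => (T.irrefl (Subsingleton.elim u v ▸ huv)).elim, rfl⟩
      uniq := fun f => Subtype.ext <| funext fun v => by rw [Subsingleton.elim v r, f.2.2] }
  exact Nat.card_unique

lemma rootedHomCount_iso {V W : Type} {G : SimpleGraph V} {G' : SimpleGraph W} (e : G ≃g G')
    (r : V) : rootedHomCount R G' (e r) = rootedHomCount R G r := by
  funext x
  refine Nat.card_congr ((e.toEquiv.arrowCongr (Equiv.refl X)).subtypeEquiv fun f => ?_).symm
  simp only [Equiv.arrowCongr_apply, Equiv.coe_refl, Function.comp_apply, id,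
    ← RelIso.coe_fn_toEquiv, Equiv.symm_apply_apply]
  refine and_congr ⟨fun h u v huv => h _ _ (e.symm.map_adj_iff.mpr huv), fun h u v huv => ?_⟩
    Iff.rfl
  simpa only [← RelIso.coe_fn_toEquiv, Equiv.symm_apply_apply] using
    h (e u) (e v) (e.map_adj_iff.mpr huv)

variable [Fintype X]

lemma homCount_eq_sum_rootedHomCount {V : Type} [Fintype V] (T : SimpleGraph V) (r : V) :
    homCount T R = ∑ x, rootedHomCount R T r x :=
  card_subtype_eq_sum_card_fiber _ fun f : V → X => f r

variable [DecidableRel R]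

lemma card_subtype_adj_root {V : Type} [Finite V] (T : SimpleGraph V) (c : V) (x : X) :
    Nat.card {f : V → X // (∀ u v, T.Adj u v → R (f u) (f v)) ∧ R x (f c)}
      = (relMatrix R *ᵥ rootedHomCount R T c) x := by
  rw [card_subtype_eq_sum_card_fiber _ fun f => f c]
  refine sum_congr rfl fun y _ => ?_
  by_cases hxy : R x y
  · simp only [relMatrix, of_apply, if_pos hxy, one_mul, rootedHomCount]
    exact Nat.card_congr (Equiv.subtypeEquivRight fun f => by
      constructor
      · rintro ⟨⟨hf, -⟩, rfl⟩; exact ⟨hf, rfl⟩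
      · rintro ⟨hf, rfl⟩; exact ⟨⟨hf, hxy⟩, rfl⟩)
  · simp only [relMatrix, of_apply, if_neg hxy, zero_mul]
    have : IsEmpty {f : V → X // ((∀ u v, T.Adj u v → R (f u) (f v)) ∧ R x (f c)) ∧ f c = y} :=
      ⟨fun f => hxy (f.2.2 ▸ f.2.1.2)⟩
    exact Nat.card_of_isEmpty

variable [Std.Symm R]

/-- A coloring of `T` is a pair of colorings of the two sides of the cut edge `rc` whose
colors at `r` and `c` are adjacent. -/
lemma rootedHomCount_eq_mul_mulVec {V : Type} [Finite V] {T : SimpleGraph V} {r c : V}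
    (hrc : T.Adj r c) {S : Set V} (hr : r ∈ S) (hc : c ∉ S)
    (hcross : ∀ u v, T.Adj u v → u ∈ S → v ∉ S → u = r ∧ v = c) :
    rootedHomCount R T r = rootedHomCount R (T.induce S) ⟨r, hr⟩ *
      (relMatrix R *ᵥ rootedHomCount R (T.induce Sᶜ) ⟨c, hc⟩) := by
  classical
  funext x
  rw [Pi.mul_apply, ← card_subtype_adj_root, rootedHomCount, rootedHomCount, ← Nat.card_prod]
  refine Nat.card_congr (((Equiv.piEquivPiSubtypeProd (· ∈ S) fun _ => X).subtypeEquiv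
    fun f => ?_).trans Equiv.subtypeProdEquivProd)
  constructor
  · rintro ⟨hf, rfl⟩
    exact ⟨⟨fun u v huv => hf _ _ huv, rfl⟩, fun u v huv => hf _ _ huv, hf _ _ hrc⟩
  · rintro ⟨⟨hfS, rfl⟩, hfSc, hfc⟩
    refine ⟨fun u v huv => ?_, rfl⟩
    by_cases hu : u ∈ S <;> by_cases hv : v ∈ S
    · exact hfS ⟨u, hu⟩ ⟨v, hv⟩ huv
    · obtain ⟨rfl, rfl⟩ := hcross u v huv hu hv
      exact hfc
    · obtain ⟨rfl, rfl⟩ := hcross v u huv.symm hv hu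
      exact symm_of R hfc
    · exact hfSc ⟨u, hu⟩ ⟨v, hv⟩ huv

variable [DecidableEq X]

lemma rootedHomCount_pathGraph (n : ℕ) :
    rootedHomCount R (pathGraph (n + 1)) 0 = relMatrix R ^ n *ᵥ 1 := by
  induction n with
  | zero => simpa using rootedHomCount_of_subsingleton _ _
  | succ n ih =>
    have hcross : ∀ u v, (pathGraph (n + 2)).Adj u v → u ∈ ({0} : Set (Fin (n + 2))) →
        v ∉ ({0} : Set (Fin (n + 2))) → u = 0 ∧ v = Fin.succ 0 := by
      rintro u v huv rfl -
      refine ⟨rfl, Fin.ext ?_⟩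
      rw [pathGraph_adj] at huv
      simp at huv ⊢
      omega
    have hadj : (pathGraph (n + 2)).Adj 0 (Fin.succ 0) := by simp [pathGraph_adj]
    rw [rootedHomCount_eq_mul_mulVec hadj (Set.mem_singleton 0) (Fin.succ_ne_zero 0) hcross,
      rootedHomCount_of_subsingleton, one_mul]
    rw [pow_succ', ← mulVec_mulVec, ← ih]
    exact congrArg _ (rootedHomCount_iso (pathGraphSuccIso n) 0)

variable {α : Type*} [LinearOrder α] {ι : X → α}

theorem rootedHomCount_dominates (hR : PreservesMonotoneAlong ι (relMatrix R)) {V : Type}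
    [Finite V] {T : SimpleGraph V} (hT : T.IsTree) (r : V) :
    MonotoneAlong ι (rootedHomCount R T r) ∧
      Dominates ι (rootedHomCount R T r) (relMatrix R ^ (Nat.card V - 1) *ᵥ 1) := by
  classical
  induction hN : Nat.card V using Nat.strong_induction_on generalizing V with
  | _ N ih =>
  rcases subsingleton_or_nontrivial V with _ | _
  · rw [rootedHomCount_of_subsingleton, ← hN, Nat.card_of_subsingleton r]
    simpa using ⟨monotoneAlong_one, Dominates.refl _⟩
  obtain ⟨c, hrc⟩ := hT.connected.preconnected.exists_adj_of_nontrivial r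
  obtain ⟨S, hr, hc, hcross, hS, hSc⟩ := hT.exists_induce_isTree_compl hrc
  have hcard : Nat.card S + Nat.card ↥Sᶜ = N := by
    rw [← hN, ← Nat.card_sum, Nat.card_congr (Equiv.Set.sumCompl S)]
  have : Nonempty S := ⟨⟨r, hr⟩⟩
  have : Nonempty ↥Sᶜ := ⟨⟨c, hc⟩⟩
  have : 0 < Nat.card S := Nat.card_pos
  have : 0 < Nat.card ↥Sᶜ := Nat.card_pos
  obtain ⟨hmS, hdS⟩ := ih _ (by omega) hS ⟨r, hr⟩ rfl
  obtain ⟨hmSc, hdSc⟩ := ih _ (by omega) hSc ⟨c, hc⟩ rfl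
  have hdSc' := hdSc.mulVec (relMatrix_isSymm R) hR
  rw [mulVec_mulVec, ← pow_succ'] at hdSc'
  rw [rootedHomCount_eq_mul_mulVec hrc hr hc hcross]
  refine ⟨hmS.mul (hR _ hmSc), ?_⟩
  convert (hdS.mul (monotoneAlong_pow_mulVec_one hR _) (hR _ hmSc) hdSc').trans
    (dominates_pow_add (relMatrix_isSymm R) hR _ _) using 3
  omega

theorem homCount_pathGraph_le (hR : PreservesMonotoneAlong ι (relMatrix R)) {V : Type}
    [Fintype V] {T : SimpleGraph V} (hT : T.IsTree) {n : ℕ} (hn : Fintype.card V = n) :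
    homCount (pathGraph n) R ≤ homCount T R := by
  obtain ⟨r⟩ := hT.connected.nonempty
  obtain ⟨n, rfl⟩ := Nat.exists_eq_succ_of_ne_zero (hn ▸ Fintype.card_pos_iff.mpr ⟨r⟩).ne'
  have hdom := (rootedHomCount_dominates hR hT r).2
  rw [Nat.card_eq_fintype_card, hn, Nat.succ_sub_one] at hdom
  rw [homCount_eq_sum_rootedHomCount _ 0, homCount_eq_sum_rootedHomCount T r,
    rootedHomCount_pathGraph]
  exact hdom.sum_le

end Trees

def IsNeighborCountMatrix {VH : Type} {k : ℕ} (HAdj : VH → VH → Prop) (cls : VH → Fin k)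
    (m : Fin k → Fin k → ℕ) : Prop :=
  ∀ (i j : Fin k) (v : VH), cls v = i → Nat.card {w : VH // HAdj v w ∧ cls w = j} = m i j

def HasIncreasingColumns {k : ℕ} (m : Fin k → Fin k → ℕ) : Prop :=
  ∀ (c i : Fin k) (hi : i.val + 1 < k), ∑ j : Fin k, (if c ≤ j then m i j else 0) ≤
    ∑ j : Fin k, (if c ≤ j then m ⟨i.val + 1, hi⟩ j else 0)

def loopedRank {VH : Type} {k : ℕ} (cls : VH → Fin k) (b : ℕ) : VH ⊕ Fin b → WithTop (Fin k) :=
  Sum.elim (fun v => cls v) fun _ => ⊤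

section LoopedDominating

variable {VH : Type} {HAdj : VH → VH → Prop} {b : ℕ}

instance [DecidableRel HAdj] : DecidableRel (addLoopedDominating HAdj b)
  | .inl u, .inl v => inferInstanceAs (Decidable (HAdj u v))
  | .inl _, .inr _ => isTrue trivial
  | .inr _, .inl _ => isTrue trivial
  | .inr _, .inr _ => isTrue trivial

instance [Std.Symm HAdj] : Std.Symm (addLoopedDominating HAdj b) :=
  ⟨by rintro (u | u) (v | v) h <;> first | trivial | exact symm_of HAdj h⟩

lemma HasIncreasingColumns.monotone_sum_tail {k : ℕ} {m : Fin k → Fin k → ℕ}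
    (hinc : HasIncreasingColumns m) (c : Fin k) :
    Monotone fun i => ∑ j, if c ≤ j then m i j else 0 := by
  cases k with
  | zero => exact fun i => i.elim0
  | succ k => exact Fin.monotone_iff_le_succ.mpr fun i => hinc c i.castSucc (by simp)

variable [Fintype VH] [DecidableRel HAdj] {k : ℕ} {cls : VH → Fin k} {m : Fin k → Fin k → ℕ}

lemma IsNeighborCountMatrix.sum_tail_relMatrix (hm : IsNeighborCountMatrix HAdj cls m) (v : VH)
    (c : Fin k) :
    ∑ w, (if c ≤ cls w then relMatrix HAdj v w else 0) = ∑ j, if c ≤ j then m (cls v) j else 0 := by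
  rw [← sum_fiberwise univ cls]
  refine sum_congr rfl fun j _ => ?_
  split_ifs with hcj
  · rw [← hm _ j v rfl, Nat.card_eq_fintype_card, Fintype.card_subtype, card_filter, sum_filter]
    refine sum_congr rfl fun w _ => ?_
    by_cases hw : cls w = j <;> by_cases h : HAdj v w <;> simp [relMatrix, hw, h, hcj]
  · exact sum_eq_zero fun w hw => if_neg ((mem_filter.mp hw).2 ▸ hcj)

lemma preservesMonotoneAlong_relMatrix (hm : IsNeighborCountMatrix HAdj cls m)
    (hinc : HasIncreasingColumns m) :
    PreservesMonotoneAlong cls (relMatrix HAdj) :=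
  preservesMonotoneAlong_of_dominates fun v v' hvv' => dominates_of_forall_tail_le fun c => by
    simpa only [hm.sum_tail_relMatrix] using hinc.monotone_sum_tail c hvv'

lemma relMatrix_addLoopedDominating_mulVec_inl (g : VH ⊕ Fin b → ℕ) (v : VH) :
    (relMatrix (addLoopedDominating HAdj b) *ᵥ g) (.inl v)
      = (relMatrix HAdj *ᵥ (g ∘ Sum.inl)) v + ∑ j, g (.inr j) := by
  simp only [mulVec, dotProduct, Fintype.sum_sum_type, Function.comp_apply]
  congr 1
  simp [relMatrix, addLoopedDominating]

lemma relMatrix_addLoopedDominating_mulVec_inr (g : VH ⊕ Fin b → ℕ) (j : Fin b) :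
    (relMatrix (addLoopedDominating HAdj b) *ᵥ g) (.inr j) = ∑ z, g z := by
  simp [mulVec, dotProduct, relMatrix, Fintype.sum_sum_type, addLoopedDominating]

theorem preservesMonotoneAlong_addLoopedDominating (hm : IsNeighborCountMatrix HAdj cls m)
    (hinc : HasIncreasingColumns m) :
    PreservesMonotoneAlong (loopedRank cls b) (relMatrix (addLoopedDominating HAdj b)) := by
  intro g hg z w hzw
  rcases w with v' | _
  · rcases z with v | _
    · simp only [relMatrix_addLoopedDominating_mulVec_inl]
      refine Nat.add_le_add_right (preservesMonotoneAlong_relMatrix hm hinc _ ?_ ?_) _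
      · exact fun u u' huu' => hg (WithTop.coe_le_coe.mpr huu')
      · exact WithTop.coe_le_coe.mp hzw
    · simp [loopedRank] at hzw
  · rw [relMatrix_addLoopedDominating_mulVec_inr]
    exact relMatrix_mulVec_le_sum _ g z

end LoopedDominating

end HoffmanLondon

theorem add_looped_dominating_hoffman_london_general
    {VH : Type} [Fintype VH]
    (HAdj : VH → VH → Prop) (hsymm : Symmetric HAdj)
    (k : ℕ) (cls : VH → Fin k)
    (m : Fin k → Fin k → ℕ)
    (hm : ∀ (i j : Fin k) (v : VH), cls v = i →
      Nat.card {w : VH // HAdj v w ∧ cls w = j} = m i j)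
    (hinc : ∀ (c i : Fin k) (hi : i.val + 1 < k),
      ∑ j : Fin k, (if c ≤ j then m i j else 0) ≤
      ∑ j : Fin k, (if c ≤ j then m ⟨i.val + 1, hi⟩ j else 0))
    (b : ℕ) :
    ∀ n : ℕ, 1 ≤ n → ∀ T : SimpleGraph (Fin n), T.IsTree →
      homCount (SimpleGraph.pathGraph n) (addLoopedDominating HAdj b) ≤
        homCount T (addLoopedDominating HAdj b) := by
  intro n _ T hT
  classical
  have : Std.Symm HAdj := ⟨fun _ _ h => hsymm h⟩
  exact HoffmanLondon.homCount_pathGraph_le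
    (HoffmanLondon.preservesMonotoneAlong_addLoopedDominating hm hinc) hT (Fintype.card_fin n)

/-- **Proposition.** Let `H` be a target graph whose automorphic similarity classes can be
ordered so that the automorphic similarity matrix has the increasing columns property, and
let `H̃` be obtained from `H` by adding `b ≥ 1` looped dominating vertices. Then `H̃` is
Hoffman-London. -/
theorem add_looped_dominating_hoffman_london
    {VH : Type} [Fintype VH]
    (HAdj : VH → VH → Prop) (hsymm : Symmetric HAdj)
    (k : ℕ) (cls : VH → Fin k) (hsurj : Function.Surjective cls)
    (hcls : ∀ u v : VH, cls u = cls v ↔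
      ∃ φ : VH ≃ VH, (∀ x y : VH, HAdj x y ↔ HAdj (φ x) (φ y)) ∧ φ u = v)
    (m : Fin k → Fin k → ℕ)
    (hm : ∀ (i j : Fin k) (v : VH), cls v = i →
      Nat.card {w : VH // HAdj v w ∧ cls w = j} = m i j)
    (hinc : ∀ (c i : Fin k) (hi : i.val + 1 < k),
      ∑ j : Fin k, (if c ≤ j then m i j else 0) ≤
      ∑ j : Fin k, (if c ≤ j then m ⟨i.val + 1, hi⟩ j else 0))
    (b : ℕ) (hb : 1 ≤ b) :
    ∀ n : ℕ, 1 ≤ n → ∀ T : SimpleGraph (Fin n), T.IsTree →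
      homCount (SimpleGraph.pathGraph n) (addLoopedDominating HAdj b) ≤
        homCount T (addLoopedDominating HAdj b) :=
  add_looped_dominating_hoffman_london_general HAdj hsymm k cls m hm hinc b
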